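/- Let G = (V, E) be a graph with no isolated vertices, at least one edge, V = {v₁, …, v_n}, and let k be a positive integer. Let H be the graph with k disjoint copies V_j = {v₁^j, …, v_n^j} (j ∈ [k]) of V, V_s = {s_{uv}, s'_{uv} : uv ∈ E}, V_t = {t_{uv}, t'_{uv} : uv ∈ E}, vertex set V(H) = ⋃_{j=1}^k V_j ∪ V_s ∪ V_t, and edge set consisting of u^j s_{uv}, u^j s'_{uv}, v^j s_{uv}, v^j s'_{uv} for each uv ∈ E and j ∈ [k] together with all edges between V_s and V_t. Then for every rainbow vertex-disconnection coloring c_H of H and every edge uv ∈ E, the set Q_{uv} = {u^1, …, u^k} ∪ {v^1, …, v^k} is rainbow under c_H, and the colors appearing on ⋃_{j=1}^k V_j are disjoint from the colors appearing on V_t; consequently χ_k(G) ≤ rvd(H) − 2|E|. -/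

import Mathlib

open SimpleGraph

variable {V : Type*}

/-- `c` is a rainbow vertex-disconnection coloring of `G`: for any two distinct vertices
`x, y` there is a set `S` avoiding `x` and `y` that meets every `x`-`y` walk of `G - xy`
(i.e. `x` and `y` lie in different components of `(G - xy) - S`), and which is rainbow
(when `x, y` nonadjacent), resp. such that `S + x` or `S + y` is rainbow (when adjacent). -/
def IsRVDColoring {α : Type*} (G : SimpleGraph V) (c : V → α) : Prop :=
  ∀ x y : V, x ≠ y → ∃ S : Set V,
    x ∉ S ∧ y ∉ S ∧
    (∀ p : (G.deleteEdges {s(x, y)}).Walk x y, ∃ v ∈ p.support, v ∈ S) ∧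
    (G.Adj x y → Set.InjOn c (insert x S) ∨ Set.InjOn c (insert y S)) ∧
    (¬ G.Adj x y → Set.InjOn c S)

/-- The rainbow vertex-disconnection number: the minimum number of colors of a
rainbow vertex-disconnection coloring. -/
noncomputable def rvd (G : SimpleGraph V) : ℕ :=
  sInf {n | ∃ c : V → Fin n, IsRVDColoring G c}

/-- `G` contains `K₄` as a minor (via a minor model with four branch sets). -/
def HasK4Minor (G : SimpleGraph V) : Prop :=
  ∃ B : Fin 4 → Set V,
    (∀ i, (B i).Nonempty) ∧
    (∀ i, (G.induce (B i)).Connected) ∧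
    (∀ i j, i ≠ j → Disjoint (B i) (B j)) ∧
    (∀ i j, i ≠ j → ∃ a ∈ B i, ∃ b ∈ B j, G.Adj a b)

/-- A finite graph is 2-connected if it has at least 3 vertices and deleting any
single vertex leaves a connected graph. -/
def TwoConnected [Fintype V] (G : SimpleGraph V) : Prop :=
  3 ≤ Fintype.card V ∧ ∀ w : V, (G.induce ({w}ᶜ : Set V)).Connected

/-- Contraction of the edge `uv`: delete `v` and join `u` to the former neighbors of `v`. -/
def contractEdge (G : SimpleGraph V) (u v : V) : SimpleGraph {x : V // x ≠ v} where
  Adj a b := a ≠ b ∧ (G.Adj a b ∨ ((a : V) = u ∧ G.Adj v b) ∨ ((b : V) = u ∧ G.Adj v a))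
  symm := by
    constructor
    rintro a b ⟨h1, h2⟩
    refine ⟨h1.symm, ?_⟩
    rcases h2 with h | h | h
    · exact Or.inl h.symm
    · exact Or.inr (Or.inr h)
    · exact Or.inr (Or.inl h)
  loopless := by constructor; rintro a ⟨h, _⟩; exact h rfl

/-- `T_G(u)`: vertices `x` of degree at least 3 that are adjacent to `u` or joined
to `u` through a `2`-vertex. -/
def Tset [Fintype V] (G : SimpleGraph V) [DecidableRel G.Adj] (u : V) : Set V :=
  {x | 3 ≤ G.degree x ∧ (G.Adj u x ∨ ∃ z : V, G.degree z = 2 ∧ G.Adj u z ∧ G.Adj z x)}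

/-- `t_G(u) = |T_G(u)|`. -/
noncomputable def tnum [Fintype V] (G : SimpleGraph V) [DecidableRel G.Adj] (u : V) : ℕ :=
  (Tset G u).ncard

/-- An injective coloring: vertices with a common neighbor get distinct colors. -/
def IsInjectiveColoring {α : Type*} (G : SimpleGraph V) (c : V → α) : Prop :=
  ∀ u v w : V, G.Adj u w → G.Adj v w → u ≠ v → c u ≠ c v

/-- The injective chromatic number. -/
noncomputable def injChromaticNumber (G : SimpleGraph V) : ℕ :=
  sInf {n | ∃ c : V → Fin n, IsInjectiveColoring G c}

/-- A graph has no cut vertex if deleting any vertex leaves a preconnected graph. -/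
def HasNoCutVertex {W : Type*} (H : SimpleGraph W) : Prop :=
  ∀ w : W, (H.induce ({w}ᶜ : Set W)).Preconnected

/-- A block of `G`: a maximal connected subgraph of `G` without a cut vertex. -/
def IsBlock (G : SimpleGraph V) (H : G.Subgraph) : Prop :=
  H.coe.Connected ∧ HasNoCutVertex H.coe ∧
    ∀ H' : G.Subgraph, H ≤ H' → H'.coe.Connected → HasNoCutVertex H'.coe → H' = H

/-- `c` is a `k`-fold coloring: each vertex receives `k` colors, adjacent vertices get
disjoint color sets. -/
def IsKFoldColoring {n : ℕ} (G : SimpleGraph V) (k : ℕ) (c : V → Finset (Fin n)) : Prop :=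
  (∀ v, (c v).card = k) ∧ ∀ u v, G.Adj u v → Disjoint (c u) (c v)

/-- The `k`-fold chromatic number `χ_k(G)`. -/
noncomputable def kfoldChromaticNumber (G : SimpleGraph V) (k : ℕ) : ℕ :=
  sInf {n | ∃ c : V → Finset (Fin n), IsKFoldColoring G k c}

/-- The fractional chromatic number `χ_f(G) = inf_k χ_k(G)/k`. -/
noncomputable def fracChromaticNumber (G : SimpleGraph V) : ℝ :=
  ⨅ k : {k : ℕ // 0 < k}, (kfoldChromaticNumber G k : ℝ) / (k : ℕ)

/-- The chromatic number as a natural number. -/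
noncomputable def natChromaticNumber (G : SimpleGraph V) : ℕ :=
  sInf {n | G.Colorable n}

/-- The independence number `α(G)`. -/
noncomputable def indepNumber (G : SimpleGraph V) : ℕ :=
  sSup {n | ∃ s : Set V, (∀ u ∈ s, ∀ v ∈ s, ¬ G.Adj u v) ∧ s.ncard = n}

/-- The bipartite graph `G̃` from the reduction: original vertices `V`, vertices
`s_{uv}, s'_{uv}` (type `↥G.edgeSet × Fin 2`, left summand) and `t_{uv}, t'_{uv}`
(right summand); each of `s_{uv}, s'_{uv}` is joined to `u` and `v`, and all
edges between `V_s` and `V_t` are present. -/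
def tildeBip (G : SimpleGraph V) :
    SimpleGraph (V ⊕ ((↥G.edgeSet × Fin 2) ⊕ (↥G.edgeSet × Fin 2))) :=
  SimpleGraph.fromRel fun x y =>
    (∃ (a : V) (e : ↥G.edgeSet) (i : Fin 2),
        x = Sum.inl a ∧ y = Sum.inr (Sum.inl (e, i)) ∧ a ∈ (e : Sym2 V)) ∨
    (∃ p q, x = Sum.inr (Sum.inl p) ∧ y = Sum.inr (Sum.inr q))

/-- The split graph `G̃` from the reduction: original vertices `V` and a clique on
`V_s = {s_{uv}, s'_{uv}, s''_{uv}}`, each of the three joined to `u` and `v`. -/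
def tildeSplit (G : SimpleGraph V) : SimpleGraph (V ⊕ (↥G.edgeSet × Fin 3)) :=
  SimpleGraph.fromRel fun x y =>
    (∃ (a : V) (e : ↥G.edgeSet) (i : Fin 3),
        x = Sum.inl a ∧ y = Sum.inr (e, i) ∧ a ∈ (e : Sym2 V)) ∨
    (∃ p q, x = Sum.inr p ∧ y = Sum.inr q)

/-- The graph `H`: `k` copies of `V` together with `V_s` and `V_t` as in `tildeBip`. -/
def HBip (G : SimpleGraph V) (k : ℕ) :
    SimpleGraph ((V × Fin k) ⊕ ((↥G.edgeSet × Fin 2) ⊕ (↥G.edgeSet × Fin 2))) :=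
  SimpleGraph.fromRel fun x y =>
    (∃ (a : V) (j : Fin k) (e : ↥G.edgeSet) (i : Fin 2),
        x = Sum.inl (a, j) ∧ y = Sum.inr (Sum.inl (e, i)) ∧ a ∈ (e : Sym2 V)) ∨
    (∃ p q, x = Sum.inr (Sum.inl p) ∧ y = Sum.inr (Sum.inr q))

/-- The graph `H`: `k` copies of `V` together with the clique `V_s` as in `tildeSplit`. -/
def HSplit (G : SimpleGraph V) (k : ℕ) :
    SimpleGraph ((V × Fin k) ⊕ (↥G.edgeSet × Fin 3)) :=
  SimpleGraph.fromRel fun x y =>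
    (∃ (a : V) (j : Fin k) (e : ↥G.edgeSet) (i : Fin 3),
        x = Sum.inl (a, j) ∧ y = Sum.inr (e, i) ∧ a ∈ (e : Sym2 V)) ∨
    (∃ p q, x = Sum.inr p ∧ y = Sum.inr q)


/-! The vertices `s_{uv}` and `s'_{uv}` of `H` are nonadjacent, and every common neighbour of
them (each copy of `u` and `v`, and each vertex of `V_t`) lies on a path of length two between
them, hence in every `s_{uv}`–`s'_{uv}` vertex-cut, which has to be rainbow. So
`Q_{uv} ∪ V_t` is rainbow for every edge `uv`. In a coloring with `rvd(H)` colors, `V_t` thus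
takes `2|E|` colors that appear on no copy of `V`, and giving `v ∈ V` the colors of
`v^1, …, v^k` is a `k`-fold coloring of `G` from the remaining `rvd(H) - 2|E|` colors. -/

section RVD

variable {W α : Type*} {G : SimpleGraph W} {c : W → α}

theorem IsRVDColoring.injOn_commonNeighbors (hc : IsRVDColoring G c) {x y : W} (hxy : x ≠ y)
    (hadj : ¬ G.Adj x y) : Set.InjOn c (G.commonNeighbors x y) := by
  obtain ⟨S, hxS, hyS, hcut, -, hrainbow⟩ := hc x y hxy
  refine (hrainbow hadj).mono fun w hw => ?_
  rw [mem_commonNeighbors] at hw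
  have hdel : G ≤ G.deleteEdges {s(x, y)} :=
    (deleteEdges_eq_self.mpr (Set.disjoint_singleton_right.mpr hadj)).ge
  obtain ⟨v, hv, hvS⟩ := hcut ((Walk.cons hw.1 (Walk.cons hw.2.symm Walk.nil)).mapLe hdel)
  simp only [Walk.support_mapLe_eq_support, Walk.support_cons, Walk.support_nil,
    List.mem_cons, List.not_mem_nil, or_false] at hv
  rcases hv with rfl | rfl | rfl
  exacts [absurd hvS hxS, hvS, absurd hvS hyS]

theorem isRVDColoring_of_injective (hc : Function.Injective c) : IsRVDColoring G c := by
  intro x y hxy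
  refine ⟨{x, y}ᶜ, by simp, by simp, fun p => ?_, fun _ => Or.inl hc.injOn, fun _ => hc.injOn⟩
  cases p with
  | nil => exact absurd rfl hxy
  | @cons _ w _ h q =>
    refine ⟨w, List.mem_cons_of_mem _ q.start_mem_support, ?_⟩
    rw [deleteEdges_adj, Set.mem_singleton_iff] at h
    simp only [Set.mem_compl_iff, Set.mem_insert_iff, Set.mem_singleton_iff, not_or]
    exact ⟨h.1.ne', by rintro rfl; exact h.2 rfl⟩

theorem exists_isRVDColoring_rvd [Finite W] (G : SimpleGraph W) :
    ∃ c : W → Fin (rvd G), IsRVDColoring G c := by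
  have := Fintype.ofFinite W
  exact Nat.sInf_mem (s := {n | ∃ c : W → Fin n, IsRVDColoring G c})
    ⟨_, _, isRVDColoring_of_injective (Fintype.equivFin W).injective⟩

end RVD

theorem kfoldChromaticNumber_le_card {α : Type*} (G : SimpleGraph V) {k : ℕ}
    (f : V × Fin k → α) (C : Finset α) (hfC : ∀ p, f p ∈ C)
    (hinj : ∀ a, Function.Injective fun j => f (a, j))
    (hadj : ∀ a b, G.Adj a b → ∀ i j, f (a, i) ≠ f (b, j)) :
    kfoldChromaticNumber G k ≤ C.card := by
  classical
  let g : V × Fin k → Fin C.card := fun p => C.equivFin ⟨f p, hfC p⟩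
  have hg : ∀ p q, g p = g q → f p = f q := fun p q h =>
    congrArg Subtype.val (C.equivFin.injective h)
  refine Nat.sInf_le
    ⟨fun a => Finset.univ.image fun j => g (a, j), fun a => ?_, fun a b hab => ?_⟩
  · rw [Finset.card_image_of_injective _ fun i j h => hinj a (hg _ _ h), Finset.card_univ,
      Fintype.card_fin]
  · simp only [Finset.disjoint_left, Finset.mem_image, Finset.mem_univ, true_and]
    rintro _ ⟨i, rfl⟩ ⟨j, hj⟩
    exact hadj a b hab i j (hg _ _ hj.symm)

namespace HBip

variable {G : SimpleGraph V} {k : ℕ} {α : Type*}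
  {c : (V × Fin k) ⊕ ((↥G.edgeSet × Fin 2) ⊕ (↥G.edgeSet × Fin 2)) → α}

theorem adj_copy_s {a : V} {e : ↥G.edgeSet} (ha : a ∈ (e : Sym2 V)) (j : Fin k) (i : Fin 2) :
    (HBip G k).Adj (Sum.inl (a, j)) (Sum.inr (Sum.inl (e, i))) :=
  (fromRel_adj _ _ _).mpr ⟨Sum.inl_ne_inr, Or.inl (Or.inl ⟨a, j, e, i, rfl, rfl, ha⟩)⟩

theorem adj_s_t (p q : ↥G.edgeSet × Fin 2) :
    (HBip G k).Adj (Sum.inr (Sum.inl p)) (Sum.inr (Sum.inr q)) :=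
  (fromRel_adj _ _ _).mpr ⟨by simp, Or.inl (Or.inr ⟨p, q, rfl, rfl⟩)⟩

theorem injOn_copies_union_t (hc : IsRVDColoring (HBip G k) c) (e : ↥G.edgeSet) :
    Set.InjOn c ({x | ∃ (a : V) (j : Fin k), x = Sum.inl (a, j) ∧ a ∈ (e : Sym2 V)} ∪
      {x | ∃ p, x = Sum.inr (Sum.inr p)}) := by
  refine (hc.injOn_commonNeighbors (x := Sum.inr (Sum.inl (e, 0)))
    (y := Sum.inr (Sum.inl (e, 1))) (by simp) (by simp [HBip])).mono ?_
  rintro _ (⟨a, j, rfl, ha⟩ | ⟨p, rfl⟩) <;> rw [mem_commonNeighbors]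
  exacts [⟨(adj_copy_s ha j 0).symm, (adj_copy_s ha j 1).symm⟩, ⟨adj_s_t _ p, adj_s_t _ p⟩]

theorem injOn_copies (hc : IsRVDColoring (HBip G k) c) (e : ↥G.edgeSet) :
    Set.InjOn c {x | ∃ (a : V) (j : Fin k), x = Sum.inl (a, j) ∧ a ∈ (e : Sym2 V)} :=
  (injOn_copies_union_t hc e).mono Set.subset_union_left

theorem injective_t (hc : IsRVDColoring (HBip G k) c) :
    Function.Injective fun q : ↥G.edgeSet × Fin 2 => c (Sum.inr (Sum.inr q)) :=
  fun p q h => Sum.inr_injective <| Sum.inr_injective <|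
    injOn_copies_union_t hc p.1 (Or.inr ⟨p, rfl⟩) (Or.inr ⟨q, rfl⟩) h

theorem disjoint_image_copies_t (hiso : ∀ v : V, ∃ u : V, G.Adj v u)
    (hc : IsRVDColoring (HBip G k) c) :
    Disjoint (c '' {x | ∃ (a : V) (j : Fin k), x = Sum.inl (a, j)})
      (c '' {x | ∃ p, x = Sum.inr (Sum.inr p)}) := by
  rw [Set.disjoint_left]
  rintro _ ⟨_, ⟨a, j, rfl⟩, rfl⟩ ⟨_, ⟨p, rfl⟩, hp⟩
  obtain ⟨u, hau⟩ := hiso a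
  have := injOn_copies_union_t hc ⟨s(a, u), hau⟩ (Or.inr ⟨p, rfl⟩)
    (Or.inl ⟨a, j, rfl, Sym2.mem_mk_left a u⟩) hp
  simp at this

theorem eq_of_mem_of_mem_of_color_eq (hc : IsRVDColoring (HBip G k) c) {e : ↥G.edgeSet}
    {a b : V} (ha : a ∈ (e : Sym2 V)) (hb : b ∈ (e : Sym2 V)) {i j : Fin k}
    (h : c (Sum.inl (a, i)) = c (Sum.inl (b, j))) : a = b ∧ i = j := by
  simpa using injOn_copies hc e ⟨a, i, rfl, ha⟩ ⟨b, j, rfl, hb⟩ h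

theorem kfoldChromaticNumber_add_le [Fintype V] [DecidableRel G.Adj] {n : ℕ}
    {c : (V × Fin k) ⊕ ((↥G.edgeSet × Fin 2) ⊕ (↥G.edgeSet × Fin 2)) → Fin n}
    (hiso : ∀ v : V, ∃ u : V, G.Adj v u) (hc : IsRVDColoring (HBip G k) c) :
    kfoldChromaticNumber G k + 2 * G.edgeFinset.card ≤ n := by
  let T : Finset (Fin n) := Finset.univ.image fun q => c (Sum.inr (Sum.inr q))
  have hT : T.card = 2 * G.edgeFinset.card := by
    rw [Finset.card_image_of_injective _ (injective_t hc), Finset.card_univ, Fintype.card_prod,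
      Fintype.card_fin, edgeFinset_card, mul_comm]
  have hkfold : kfoldChromaticNumber G k ≤ Tᶜ.card := by
    refine kfoldChromaticNumber_le_card G (fun p => c (Sum.inl p)) Tᶜ (fun p => ?_)
      (fun a i j h => ?_) (fun a b hab i j h => ?_)
    · rw [Finset.mem_compl, Finset.mem_image]
      rintro ⟨q, -, hq⟩
      exact Set.disjoint_left.mp (disjoint_image_copies_t hiso hc) ⟨_, ⟨p.1, p.2, rfl⟩, rfl⟩
        ⟨_, ⟨q, rfl⟩, hq⟩
    · obtain ⟨u, hau⟩ := hiso a
      exact (eq_of_mem_of_mem_of_color_eq hc (e := ⟨s(a, u), hau⟩) (Sym2.mem_mk_left a u)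
        (Sym2.mem_mk_left a u) h).2
    · exact hab.ne (eq_of_mem_of_mem_of_color_eq hc (e := ⟨s(a, b), hab⟩)
        (Sym2.mem_mk_left a b) (Sym2.mem_mk_right a b) h).1
  rw [Finset.card_compl, Fintype.card_fin, hT] at hkfold
  have hTn : T.card ≤ n := by simpa using T.card_le_univ
  omega

end HBip

theorem rvd_HBip_coloring_properties_general [Fintype V] [DecidableEq V] (G : SimpleGraph V)
    [DecidableRel G.Adj]
    (hiso : ∀ v : V, ∃ u : V, G.Adj v u)
    (k : ℕ) :
    (∀ {α : Type} (c : ((V × Fin k) ⊕ ((↥G.edgeSet × Fin 2) ⊕ (↥G.edgeSet × Fin 2))) → α),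
      IsRVDColoring (HBip G k) c →
        (∀ e : ↥G.edgeSet,
          Set.InjOn c {x | ∃ (a : V) (j : Fin k), x = Sum.inl (a, j) ∧ a ∈ (e : Sym2 V)}) ∧
        Disjoint (c '' {x | ∃ (a : V) (j : Fin k), x = Sum.inl (a, j)})
          (c '' {x | ∃ p, x = Sum.inr (Sum.inr p)})) ∧
    (kfoldChromaticNumber G k : ℤ) ≤ (rvd (HBip G k) : ℤ) - 2 * (G.edgeFinset.card : ℤ) := by
  refine ⟨fun c hc => ⟨HBip.injOn_copies hc, HBip.disjoint_image_copies_t hiso hc⟩, ?_⟩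
  obtain ⟨c, hc⟩ := exists_isRVDColoring_rvd (HBip G k)
  have := HBip.kfoldChromaticNumber_add_le hiso hc
  omega

/-- For every rainbow vertex-disconnection coloring `c` of `H` and every edge
`uv ∈ E`, the set `Q_{uv}` of all copies of `u` and `v` is rainbow under `c`, and the colors
on the copies of `V` are disjoint from the colors on `V_t`; consequently
`χ_k(G) ≤ rvd(H) - 2|E|`. -/
theorem rvd_HBip_coloring_properties [Fintype V] [DecidableEq V] (G : SimpleGraph V)
    [DecidableRel G.Adj]
    (hiso : ∀ v : V, ∃ u : V, G.Adj v u) (hE : G.edgeSet.Nonempty)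
    (k : ℕ) (hk : 0 < k) :
    (∀ {α : Type} (c : ((V × Fin k) ⊕ ((↥G.edgeSet × Fin 2) ⊕ (↥G.edgeSet × Fin 2))) → α),
      IsRVDColoring (HBip G k) c →
        (∀ e : ↥G.edgeSet,
          Set.InjOn c {x | ∃ (a : V) (j : Fin k), x = Sum.inl (a, j) ∧ a ∈ (e : Sym2 V)}) ∧
        Disjoint (c '' {x | ∃ (a : V) (j : Fin k), x = Sum.inl (a, j)})
          (c '' {x | ∃ p, x = Sum.inr (Sum.inr p)})) ∧
    (kfoldChromaticNumber G k : ℤ) ≤ (rvd (HBip G k) : ℤ) - 2 * (G.edgeFinset.card : ℤ) :=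
  rvd_HBip_coloring_properties_general G hiso k
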